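/- Let A(z) = Σ_{i≥0} ((6i)!/((3i)!(2i)!))·(z/72)^i and B(z) = Σ_{i≥0} ((6i)!/((3i)!(2i)!))·((6i+1)/(6i−1))·(z/72)^i. Then z + 4z² + 36z²·(z·d/dz)²(log A) + 24z²·(z·d/dz)(log A) = 1/4 − (1/4)·(B/A)². -/

import Mathlib

open PowerSeries

/-- `A(z) = Σ_{i≥0} ((6i)!/((3i)!(2i)!)) (z/72)^i`. -/
noncomputable def hgA : PowerSeries ℚ :=
  PowerSeries.mk fun i =>
    ((6 * i).factorial : ℚ) / (((3 * i).factorial : ℚ) * ((2 * i).factorial : ℚ)) / 72 ^ i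

/-- `B(z) = Σ_{i≥0} ((6i)!/((3i)!(2i)!))·((6i+1)/(6i−1)) (z/72)^i`. -/
noncomputable def hgB : PowerSeries ℚ :=
  PowerSeries.mk fun i =>
    ((6 * i).factorial : ℚ) / (((3 * i).factorial : ℚ) * ((2 * i).factorial : ℚ)) *
      ((6 * (i : ℚ) + 1) / (6 * (i : ℚ) - 1)) / 72 ^ i

/-- `log(1+x) = Σ_{n≥1} (-1)^{n-1} x^n / n`. -/
noncomputable def logOneAdd : PowerSeries ℚ :=
  PowerSeries.mk fun n => if n = 0 then 0 else (-1) ^ (n - 1) / (n : ℚ)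

/-- Composition `f ∘ g` of formal power series (the correct composition whenever the
constant term of `g` vanishes). -/
noncomputable def comp (f g : PowerSeries ℚ) : PowerSeries ℚ :=
  PowerSeries.mk fun n =>
    ∑ k ∈ Finset.range (n + 1),
      PowerSeries.coeff k f * PowerSeries.coeff n (g ^ k)

/-- `log A`, defined since `A(0) = 1`. -/
noncomputable def logA : PowerSeries ℚ := comp logOneAdd (hgA - 1)

/-- The Euler operator `z·d/dz`. -/
noncomputable def euler (f : PowerSeries ℚ) : PowerSeries ℚ :=
  PowerSeries.X * PowerSeries.derivative ℚ f

/-!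
`A` is hypergeometric: the ratio of consecutive coefficients is `(6n+1)(6n+5)/(6(n+1))`, which
says that `θ = z·d/dz` satisfies `6 θA = z (36 θ²A + 36 θA + 5 A)`, and the factor
`(6n+1)/(6n-1)` in `B` turns into `B = (2z - 1) A + 12 z θA`. The chain rule for substitution
gives `θ log A = θA / A`. Writing `u = θA / A` and `w = θ²A / A`, we get `θ² log A = w - u²` and
`B / A = 2z - 1 + 12 z u`, so both sides of the claim are polynomials in `z, u, w`, and their
difference is `z` times the differential equation divided by `A`.
-/

theorem coeff_pow_eq_zero_of_lt {g : ℚ⟦X⟧} (hg : constantCoeff g = 0) {n k : ℕ} (h : n < k) :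
    coeff n (g ^ k) = 0 :=
  X_pow_dvd_iff.mp (pow_dvd_pow_of_dvd (X_dvd_iff.mpr hg) k) n h

theorem comp_eq_subst (f : ℚ⟦X⟧) {g : ℚ⟦X⟧} (hg : constantCoeff g = 0) :
    comp f g = f.subst g := by
  ext n
  rw [comp, coeff_mk, coeff_subst' (HasSubst.of_constantCoeff_zero' hg),
    finsum_eq_sum_of_support_subset _ (s := Finset.range (n + 1))]
  · simp only [smul_eq_mul]
  · intro k hk
    rw [Finset.coe_range, Set.mem_Iio]
    by_contra hkn
    exact hk (by simp only [coeff_pow_eq_zero_of_lt hg (by omega : n < k), smul_zero])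

theorem coeff_derivative_logOneAdd (n : ℕ) : coeff n (d⁄dX ℚ logOneAdd) = (-1) ^ n := by
  rw [coeff_derivative]
  simp [logOneAdd, Nat.cast_add_one_ne_zero]

theorem one_add_X_mul_derivative_logOneAdd : (1 + X) * d⁄dX ℚ logOneAdd = 1 := by
  ext n
  cases n with
  | zero => simpa [add_mul] using coeff_derivative_logOneAdd 0
  | succ m => simp [add_mul, coeff_succ_X_mul, coeff_derivative_logOneAdd, pow_succ]

theorem one_add_mul_derivative_comp_logOneAdd {g : ℚ⟦X⟧} (hg : constantCoeff g = 0) :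
    (1 + g) * d⁄dX ℚ (comp logOneAdd g) = d⁄dX ℚ g := by
  have hg' := HasSubst.of_constantCoeff_zero' hg
  have h := congrArg (subst g) one_add_X_mul_derivative_logOneAdd
  rw [← coe_substAlgHom hg', map_mul, map_add, map_one, coe_substAlgHom hg', subst_X hg'] at h
  rw [comp_eq_subst _ hg, derivative_subst hg', ← mul_assoc, h, one_mul]

theorem coeff_ofNat_mul {R : Type*} [Semiring R] (k : ℕ) [k.AtLeastTwo] (f : R⟦X⟧) (n : ℕ) :
    coeff n (ofNat(k) * f) = ofNat(k) * coeff n f := by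
  rw [← map_ofNat C, coeff_C_mul]

theorem coeff_euler (f : ℚ⟦X⟧) (n : ℕ) : coeff n (euler f) = n * coeff n f := by
  cases n with
  | zero => simp [euler]
  | succ m => rw [euler, coeff_succ_X_mul, coeff_derivative]; push_cast; ring

theorem euler_mul (f g : ℚ⟦X⟧) : euler (f * g) = f * euler g + g * euler f := by
  simp only [euler, Derivation.leibniz, smul_eq_mul]; ring

theorem euler_inv (f : ℚ⟦X⟧) : euler f⁻¹ = -f⁻¹ ^ 2 * euler f := by
  rw [euler, euler, derivative_inv']; ring

theorem euler_comp_logOneAdd_sub_one {A : ℚ⟦X⟧} (hA : constantCoeff A = 1) :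
    euler (comp logOneAdd (A - 1)) = euler A * A⁻¹ := by
  have hlog := one_add_mul_derivative_comp_logOneAdd (g := A - 1) (by simp [hA])
  have hinv : A * A⁻¹ = 1 := PowerSeries.mul_inv_cancel _ (by simp [hA])
  rw [add_sub_cancel, map_sub, derivative_one, sub_zero] at hlog
  rw [euler, euler, ← hlog]
  linear_combination -(X * d⁄dX ℚ (comp logOneAdd (A - 1))) * hinv

theorem euler_euler_comp_logOneAdd_sub_one {A : ℚ⟦X⟧} (hA : constantCoeff A = 1) :
    euler (euler (comp logOneAdd (A - 1))) = euler (euler A) * A⁻¹ - (euler A * A⁻¹) ^ 2 := by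
  rw [euler_comp_logOneAdd_sub_one hA, euler_mul, euler_inv]
  ring

theorem constantCoeff_hgA : constantCoeff hgA = 1 := by
  simp [hgA, ← coeff_zero_eq_constantCoeff_apply]

theorem cast_factorial_add (m k : ℕ) :
    ((m + k).factorial : ℚ) = m.factorial * ∏ i ∈ Finset.range k, ((m : ℚ) + i + 1) := by
  rw [← Nat.factorial_mul_ascFactorial, Nat.ascFactorial_eq_prod_range]
  push_cast
  simp only [add_right_comm]

theorem coeff_hgA_succ_mul (n : ℕ) :
    coeff (n + 1) hgA * (6 * n + 6) = (6 * n + 1) * (6 * n + 5) * coeff n hgA := by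
  simp only [hgA, coeff_mk, mul_add, mul_one, cast_factorial_add, Finset.prod_range_succ,
    Finset.prod_range_zero]
  field_simp
  push_cast
  ring

theorem six_mul_euler_hgA :
    6 * euler hgA = X * (36 * euler (euler hgA) + 36 * euler hgA + 5 * hgA) := by
  ext n
  cases n with
  | zero => simp [coeff_ofNat_mul, coeff_euler]
  | succ m =>
    simp only [coeff_ofNat_mul, coeff_euler, Nat.cast_add, Nat.cast_one, coeff_succ_X_mul, map_add]
    linear_combination coeff_hgA_succ_mul m

theorem coeff_hgB (n : ℕ) : coeff n hgB = coeff n hgA * ((6 * n + 1) / (6 * n - 1)) := by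
  simp only [hgB, hgA, coeff_mk]
  ring

theorem hgB_eq : hgB = (2 * X - 1) * hgA + 12 * X * euler hgA := by
  ext n
  cases n with
  | zero => simp [hgB, hgA]
  | succ m =>
    have hden : 6 * ((m : ℚ) + 1) - 1 = 6 * m + 5 := by ring
    have hpos : (6 * (m : ℚ) + 5) ≠ 0 := by positivity
    simp only [coeff_hgB, mul_assoc, sub_mul, map_add, map_sub, coeff_succ_X_mul, coeff_ofNat_mul,
      coeff_euler, one_mul]
    push_cast
    rw [hden]
    field_simp
    linear_combination 2 * coeff_hgA_succ_mul m

/-- `z + 4z² + 36z²·(z d/dz)²(log A) + 24z²·(z d/dz)(log A) = 1/4 − (1/4)(B/A)²`. -/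
theorem logA_relation :
    PowerSeries.X + 4 * PowerSeries.X ^ 2 + 36 * PowerSeries.X ^ 2 * euler (euler logA) +
        24 * PowerSeries.X ^ 2 * euler logA =
      PowerSeries.C (1 / 4 : ℚ) - PowerSeries.C (1 / 4 : ℚ) * (hgB * hgA⁻¹) ^ 2 := by
  have hinv : hgA * hgA⁻¹ = 1 := PowerSeries.mul_inv_cancel _ (by simp [constantCoeff_hgA])
  set u := euler hgA * hgA⁻¹
  have hode : X * (36 * (euler (euler hgA) * hgA⁻¹) + 36 * u + 5) = 6 * u := by
    linear_combination -hgA⁻¹ * six_mul_euler_hgA - 5 * X * hinv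
  have hquot : hgB * hgA⁻¹ = 2 * X - 1 + 12 * X * u := by
    rw [hgB_eq]
    linear_combination (2 * X - 1) * hinv
  have hquarter : 4 * C (1 / 4 : ℚ) = 1 := by
    rw [← map_ofNat C 4, ← map_mul]
    norm_num
  rw [logA, euler_euler_comp_logOneAdd_sub_one constantCoeff_hgA,
    euler_comp_logOneAdd_sub_one constantCoeff_hgA, hquot]
  -- `1 - (B/A)² = 4 P` with `P` the polynomial in `z, u` below
  linear_combination
    X * hode - (X - X ^ 2 + 6 * X * u - 12 * X ^ 2 * u - 36 * X ^ 2 * u ^ 2) * hquarter
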